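/- arXiv:2002.09929 — 2 statements merged into one kernel-verified Lean document; each statement's English description precedes it below -/
import Mathlib

section
/- Let ρ_p > 0 and λ, μ ∈ ℝ with λ + 2μ > 0, set c_p² := (λ + 2μ)/ρ_p, and let e, e_⊥ ∈ ℝ with e ≠ 0; define κ := (e − e_⊥)/e. Let u : ℝ × ℝ³ → ℝ³ be smooth, define p(t,x) := −(λ + 2μ)·(div_x u)(t,x), assume ρ_p ∂_t² u = −∇_x p everywhere, and define D₃(t,x) := e_⊥ (div_x u)(t,x) + (e − e_⊥) ∂₃u₃(t,x). Then for all (t,x): ∂_t² D₃ = −(e c_p^{−2}/ρ_p) [ ∂_t² p − κ c_p² Δ_⊥ p ], where Δ_⊥ := ∂₁² + ∂₂² is the transverse (surface) Laplacian. -/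
/-- Spatial partial derivative in the `i`-th coordinate direction. -/
noncomputable def pd (i : Fin 3) (f : (Fin 3 → ℝ) → ℝ) (x : Fin 3 → ℝ) : ℝ :=
  fderiv ℝ f x (Pi.single i 1)

namespace PiezoAux

abbrev E3 : Type := ℝ × (Fin 3 → ℝ)

/-- Directional derivative. -/
noncomputable def dd (v : E3) (F : E3 → ℝ) (q : E3) : ℝ := fderiv ℝ F q v

lemma dd_contDiff {F : E3 → ℝ} (hF : ContDiff ℝ (⊤ : ℕ∞) F) (v : E3) :
    ContDiff ℝ (⊤ : ℕ∞) (dd v F) :=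
  (hF.fderiv_right (by simp)).clm_apply contDiff_const

lemma dd_comm {F : E3 → ℝ} (hF : ContDiff ℝ (⊤ : ℕ∞) F) (v w q : E3) :
    dd v (dd w F) q = dd w (dd v F) q := by
  have hdf : Differentiable ℝ F := hF.differentiable (by simp)
  have hdf' : DifferentiableAt ℝ (fderiv ℝ F) q :=
    ((hF.fderiv_right (m := (⊤ : ℕ∞)) (by simp)).differentiable (by simp)).differentiableAt
  have hsymm := second_derivative_symmetric (f := F) (f' := fderiv ℝ F)
    (f'' := fderiv ℝ (fderiv ℝ F) q) (x := q)
    (fun y => (hdf y).hasFDerivAt) hdf'.hasFDerivAt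
  have key : ∀ a b : E3, dd a (dd b F) q = fderiv ℝ (fderiv ℝ F) q a b := by
    intro a b
    show fderiv ℝ (fun y => fderiv ℝ F y b) q a = _
    rw [fderiv_clm_apply hdf' (differentiableAt_const b)]
    simp
  rw [key v w, key w v]; exact hsymm v w

lemma dd_comm3 {F : E3 → ℝ} (hF : ContDiff ℝ (⊤ : ℕ∞) F) (v w q : E3) :
    dd v (dd w (dd w F)) q = dd w (dd w (dd v F)) q := by
  have h1 : dd v (dd w F) = dd w (dd v F) := funext fun q' => dd_comm hF v w q'
  calc dd v (dd w (dd w F)) q = dd w (dd v (dd w F)) q :=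
        dd_comm (dd_contDiff hF w) v w q
    _ = dd w (dd w (dd v F)) q := by rw [h1]

/-- time-slice derivative -/
lemma hasDerivAt_slice {F : E3 → ℝ} (hF : ContDiff ℝ (⊤ : ℕ∞) F) (x : Fin 3 → ℝ) (t : ℝ) :
    HasDerivAt (fun r => F (r, x)) (dd (1, 0) F (t, x)) t := by
  have h1 : HasDerivAt (fun r : ℝ => (r, x) : ℝ → E3) ((1 : ℝ), (0 : Fin 3 → ℝ)) t :=
    (hasDerivAt_id t).prodMk (hasDerivAt_const t x)
  exact ((hF.differentiable (by simp) (t, x)).hasFDerivAt.comp_hasDerivAt t h1 :)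

lemma deriv_slice {F : E3 → ℝ} (hF : ContDiff ℝ (⊤ : ℕ∞) F) (x : Fin 3 → ℝ) :
    (deriv fun r => F (r, x)) = fun t => dd (1, 0) F (t, x) :=
  funext fun t => (hasDerivAt_slice hF x t).deriv

lemma deriv2_slice {F : E3 → ℝ} (hF : ContDiff ℝ (⊤ : ℕ∞) F) (y : Fin 3 → ℝ) (t : ℝ) :
    deriv (fun s => deriv (fun r => F (r, y)) s) t = dd (1, 0) (dd (1, 0) F) (t, y) := by
  have : (fun s => deriv (fun r => F (r, y)) s) = fun s => dd (1, 0) F (s, y) := by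
    simpa using deriv_slice hF y
  rw [this, (hasDerivAt_slice (dd_contDiff hF _) y t).deriv]

/-- spatial-slice derivative -/
lemma pd_slice {F : E3 → ℝ} (hF : ContDiff ℝ (⊤ : ℕ∞) F) (i : Fin 3) (t : ℝ) (x : Fin 3 → ℝ) :
    pd i (fun y => F (t, y)) x = dd ((0 : ℝ), Pi.single i 1) F (t, x) := by
  have h1 : HasFDerivAt (fun y : Fin 3 → ℝ => F (t, y))
      ((fderiv ℝ F (t, x)).comp (ContinuousLinearMap.inr ℝ ℝ (Fin 3 → ℝ))) x :=
    (hF.differentiable (by simp) (t, x)).hasFDerivAt.comp x (hasFDerivAt_prodMk_right t x)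
  show fderiv ℝ (fun y => F (t, y)) x (Pi.single i 1) = _
  rw [h1.fderiv]
  rfl

/-- smoothness of spatial slice -/
lemma slice_contDiff {F : E3 → ℝ} (hF : ContDiff ℝ (⊤ : ℕ∞) F) (t : ℝ) :
    ContDiff ℝ (⊤ : ℕ∞) (fun y => F (t, y)) :=
  hF.comp (contDiff_const.prodMk contDiff_id)

lemma deriv2_combo (G : Fin 3 → E3 → ℝ) (hG : ∀ i, ContDiff ℝ (⊤ : ℕ∞) (G i)) (c₁ c₂ : ℝ)
    (x : Fin 3 → ℝ) (t : ℝ) :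
    deriv (fun s => deriv (fun r => c₁ * ∑ i, G i (r, x) + c₂ * G 2 (r, x)) s) t
      = c₁ * ∑ i, dd (1, 0) (dd (1, 0) (G i)) (t, x)
        + c₂ * dd (1, 0) (dd (1, 0) (G 2)) (t, x) := by
  have h1 : ∀ s, HasDerivAt (fun r => c₁ * ∑ i, G i (r, x) + c₂ * G 2 (r, x))
      (c₁ * ∑ i, dd (1, 0) (G i) (s, x) + c₂ * dd (1, 0) (G 2) (s, x)) s := fun s =>
    ((HasDerivAt.fun_sum fun i _ => hasDerivAt_slice (hG i) x s).const_mul c₁).fun_add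
      ((hasDerivAt_slice (hG 2) x s).const_mul c₂)
  have h2 : (fun s => deriv (fun r => c₁ * ∑ i, G i (r, x) + c₂ * G 2 (r, x)) s)
      = fun s => c₁ * ∑ i, dd (1, 0) (G i) (s, x) + c₂ * dd (1, 0) (G 2) (s, x) :=
    funext fun s => (h1 s).deriv
  rw [h2]
  exact (((HasDerivAt.fun_sum fun i _ => hasDerivAt_slice (dd_contDiff (hG i) _) x t).const_mul
      c₁).fun_add ((hasDerivAt_slice (dd_contDiff (hG 2) _) x t).const_mul c₂)).deriv

end PiezoAux

open PiezoAux

/-- with `p = −(λ+2μ) div_x u`, `ρ_p ∂_t² u = −∇_x p`,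
`c_p² = (λ+2μ)/ρ_p`, `κ = (e−e_⊥)/e` and
`D₃ = e_⊥ div_x u + (e−e_⊥) ∂₃u₃`, one has
`∂_t² D₃ = −(e c_p^{−2}/ρ_p) [ ∂_t² p − κ c_p² Δ_⊥ p ]`
where `Δ_⊥ = ∂₁² + ∂₂²`. -/
theorem electric_displacement_transverse_laplacian_relation
    (ρp lam mu e eperp : ℝ) (hρp : 0 < ρp) (hlm : 0 < lam + 2 * mu)
    (he : e ≠ 0)
    (cp2 κ : ℝ) (hcp2 : cp2 = (lam + 2 * mu) / ρp) (hκ : κ = (e - eperp) / e)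
    (u : ℝ → (Fin 3 → ℝ) → (Fin 3 → ℝ))
    (hu : ContDiff ℝ (⊤ : ℕ∞) (fun q : ℝ × (Fin 3 → ℝ) => u q.1 q.2))
    (p : ℝ → (Fin 3 → ℝ) → ℝ)
    (hp : ∀ t x, p t x = -(lam + 2 * mu) * ∑ i, pd i (fun y => u t y i) x)
    (hmotion : ∀ t x (i : Fin 3),
      ρp * deriv (fun s => deriv (fun r => u r x i) s) t = - pd i (p t) x)
    (D₃ : ℝ → (Fin 3 → ℝ) → ℝ)
    (hD₃ : ∀ t x, D₃ t x = eperp * (∑ i, pd i (fun y => u t y i) x)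
        + (e - eperp) * pd 2 (fun y => u t y 2) x) :
    ∀ t x,
      deriv (fun s => deriv (fun r => D₃ r x) s) t
        = -((e * cp2⁻¹ / ρp)
            * (deriv (fun s => deriv (fun r => p r x) s) t
                - κ * cp2 * (pd 0 (pd 0 (p t)) x + pd 1 (pd 1 (p t)) x))) := by
  intro t x
  set Fi : Fin 3 → E3 → ℝ := fun i q => u q.1 q.2 i with hFidef
  have hFi : ∀ i, ContDiff ℝ (⊤ : ℕ∞) (Fi i) := fun i => contDiff_pi.mp hu i
  set G : Fin 3 → E3 → ℝ := fun i => dd ((0 : ℝ), Pi.single i 1) (Fi i) with hGdef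
  have hG : ∀ i, ContDiff ℝ (⊤ : ℕ∞) (G i) := fun i => dd_contDiff (hFi i) _
  set a : Fin 3 → ℝ := fun i => dd (1, 0) (dd (1, 0) (G i)) (t, x) with hadef
  -- LHS
  have hDfun : (fun r => D₃ r x)
      = fun r => eperp * ∑ i, G i (r, x) + (e - eperp) * G 2 (r, x) := by
    funext r
    rw [hD₃ r x]
    congr 1
    · congr 1
      exact Finset.sum_congr rfl fun i _ => pd_slice (hFi i) i r x
    · congr 1
      exact pd_slice (hFi 2) 2 r x
  have hLHS : deriv (fun s => deriv (fun r => D₃ r x) s) t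
      = eperp * ∑ i, a i + (e - eperp) * a 2 := by
    rw [hDfun]; exact deriv2_combo G hG eperp (e - eperp) x t
  -- time second derivative of p
  have hpfun : (fun r => p r x)
      = fun r => (-(lam + 2 * mu)) * ∑ i, G i (r, x) + 0 * G 2 (r, x) := by
    funext r
    rw [hp r x, zero_mul, add_zero]
    congr 1
    exact Finset.sum_congr rfl fun i _ => pd_slice (hFi i) i r x
  have hP : deriv (fun s => deriv (fun r => p r x) s) t
      = (-(lam + 2 * mu)) * ∑ i, a i + 0 * a 2 := by
    rw [hpfun]; exact deriv2_combo G hG (-(lam + 2 * mu)) 0 x t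
  -- spatial second derivatives of p
  have hpd : ∀ i : Fin 3, pd i (pd i (p t)) x = -ρp * a i := by
    intro i
    have hK : ContDiff ℝ (⊤ : ℕ∞) (dd (1, 0) (dd (1, 0) (Fi i))) :=
      dd_contDiff (dd_contDiff (hFi i) _) _
    have h1 : pd i (p t) = fun y => -ρp * dd (1, 0) (dd (1, 0) (Fi i)) (t, y) := by
      funext y
      have hm := hmotion t y i
      have h2 : deriv (fun s => deriv (fun r => u r y i) s) t
          = dd (1, 0) (dd (1, 0) (Fi i)) (t, y) := deriv2_slice (hFi i) y t
      rw [h2] at hm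
      linarith
    have hdiff : DifferentiableAt ℝ (fun y => dd (1, 0) (dd (1, 0) (Fi i)) (t, y)) x :=
      ((slice_contDiff hK t).differentiable (by simp)).differentiableAt
    calc pd i (pd i (p t)) x
        = pd i (fun y => -ρp * dd (1, 0) (dd (1, 0) (Fi i)) (t, y)) x := by rw [h1]
      _ = -ρp * pd i (fun y => dd (1, 0) (dd (1, 0) (Fi i)) (t, y)) x := by
          unfold pd
          rw [fderiv_const_mul hdiff (-ρp)]
          simp
      _ = -ρp * dd ((0 : ℝ), Pi.single i 1) (dd (1, 0) (dd (1, 0) (Fi i))) (t, x) := by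
          rw [pd_slice hK i t x]
      _ = -ρp * a i := by
          congr 1
          exact dd_comm3 (hFi i) ((0 : ℝ), Pi.single i 1) (1, 0) (t, x)
  rw [hLHS, hP, hpd 0, hpd 1]
  simp only [Fin.sum_univ_three]
  have hρ : ρp ≠ 0 := ne_of_gt hρp
  have hl : lam + 2 * mu ≠ 0 := ne_of_gt hlm
  subst hcp2 hκ
  field_simp
  ring
end

section
/- Let c, ρ, c_b, ρ_b > 0, α := ρc/(ρ_b c_b), c_p > 0 and κ ∈ ℝ. Let n := e₃ (the third standard basis vector of ℝ³), let k ∈ ℝ³ with k ≠ 0 and k·e₃ ≥ 0, set ω := c|k|, cos θ := (k·e₃)/|k|, sin²θ := 1 − cos²θ, k_r := k − 2(k·e₃)e₃, and R := (cos θ − α)/(cos θ + α). Define p(t,x) := exp(i(x·k − ωt)) + R·exp(i(x·k_r − ωt)). Then for all t ∈ ℝ: ∂_t² p(t,0) − κ c_p² (∂₁² p + ∂₂² p)(t,0) = −ω² (1 + R)(1 − κ (c_p²/c²) sin²θ) e^{−iωt}. In particular, the directivity pattern of the piezoelectric measurement model ∂_t²V = ∂_t²p − κ c_p² Δ_⊥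 p evaluated at the origin is V/p_inc = (1 + (cos θ − α)/(cos θ + α))(1 − κ (c_p²/c²) sin²θ). -/
open Complex

/-- Euclidean dot product on `Fin 3 → ℝ`. -/
def dot3 (x y : Fin 3 → ℝ) : ℝ := ∑ i, x i * y i

/-- Spatial partial derivative of a complex-valued field in the `i`-th direction. -/
noncomputable def pdC (i : Fin 3) (f : (Fin 3 → ℝ) → ℂ) (x : Fin 3 → ℝ) : ℂ :=
  fderiv ℝ f x (Pi.single i 1)

/-!
At the origin both plane waves have phase `-ωt`, so `∂ₜ²p(t,0) = -ω²(1 + R)e^{-iωt}`.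
A plane wave with wavevector `k` is an eigenfunction of `∂ᵢ²` with eigenvalue `-kᵢ²`, and the
reflection `k ↦ k_r` fixes the components `k₁, k₂` along the boundary, so
`Δ_⊥p(t,0) = -(k₁² + k₂²)(1 + R)e^{-iωt}`. Finally `k₁² + k₂² = |k|² sin²θ = ω² sin²θ / c²`.
-/

lemma dot3_eq_dotProduct (x y : Fin 3 → ℝ) : dot3 x y = x ⬝ᵥ y := rfl

lemma dot3_self_eq (k : Fin 3 → ℝ) : dot3 k k = k 0 ^ 2 + k 1 ^ 2 + k 2 ^ 2 := by
  simp only [dot3, Fin.sum_univ_three]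
  ring

lemma dot3_self_pos {k : Fin 3 → ℝ} (hk : k ≠ 0) : 0 < dot3 k k :=
  Matrix.dotProduct_self_star_pos_iff.mpr hk

/-- `|k|² sin²θ = k₁² + k₂²`, the squared wavenumber along the plane `{x₃ = 0}`. -/
lemma dot3_self_mul_one_sub_cos_sq {k : Fin 3 → ℝ} (hk : k ≠ 0) :
    dot3 k k * (1 - (dot3 k (Pi.single 2 1) / Real.sqrt (dot3 k k)) ^ 2) = k 0 ^ 2 + k 1 ^ 2 := by
  have hS := dot3_self_pos hk
  have h_normal : dot3 k (Pi.single 2 1) = k 2 := by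
    rw [dot3_eq_dotProduct, dotProduct_single, mul_one]
  rw [h_normal, div_pow, Real.sq_sqrt hS.le, mul_sub, mul_div_cancel₀ _ hS.ne', dot3_self_eq]
  ring

noncomputable def dot3CLM (k : Fin 3 → ℝ) : (Fin 3 → ℝ) →L[ℝ] ℝ :=
  ∑ i, k i • ContinuousLinearMap.proj i

lemma hasFDerivAt_dot3 (k x : Fin 3 → ℝ) : HasFDerivAt (fun y => dot3 y k) (dot3CLM k) x :=
  HasFDerivAt.fun_sum fun i _ => (hasFDerivAt_apply i x).mul_const (k i)

lemma dot3CLM_single (k : Fin 3 → ℝ) (i : Fin 3) : dot3CLM k (Pi.single i 1) = k i := by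
  simp [dot3CLM, Pi.single_apply]

/-- The constant phase `b` carries the time dependence `-iωt`. -/
noncomputable def planeWave (A : ℂ) (k : Fin 3 → ℝ) (b : ℂ) (x : Fin 3 → ℝ) : ℂ :=
  A * cexp (I * dot3 x k + b)

lemma planeWave_zero (A : ℂ) (k : Fin 3 → ℝ) (b : ℂ) : planeWave A k b 0 = A * cexp b := by
  simp [planeWave, dot3_eq_dotProduct]

lemma hasFDerivAt_planeWave (A : ℂ) (k : Fin 3 → ℝ) (b : ℂ) (x : Fin 3 → ℝ) :
    HasFDerivAt (planeWave A k b) ((planeWave A k b x * I) • ofRealCLM.comp (dot3CLM k)) x := by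
  have h := ((((ofRealCLM.hasFDerivAt.comp x (hasFDerivAt_dot3 k x)).const_mul I).add_const b).cexp
    ).const_mul A
  refine h.congr_fderiv ?_
  ext v
  simp [planeWave]
  ring

lemma differentiable_planeWave (A : ℂ) (k : Fin 3 → ℝ) (b : ℂ) :
    Differentiable ℝ (planeWave A k b) :=
  fun x => (hasFDerivAt_planeWave A k b x).differentiableAt

lemma pdC_planeWave (i : Fin 3) (A : ℂ) (k : Fin 3 → ℝ) (b : ℂ) :
    pdC i (planeWave A k b) = planeWave (A * I * k i) k b := by
  ext x
  simp [pdC, (hasFDerivAt_planeWave A k b x).fderiv, dot3CLM_single, planeWave]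
  ring

lemma pdC_add {f g : (Fin 3 → ℝ) → ℂ} (hf : Differentiable ℝ f) (hg : Differentiable ℝ g)
    (i : Fin 3) : pdC i (f + g) = pdC i f + pdC i g := by
  ext x
  simp [pdC, fderiv_add (hf x) (hg x)]

lemma pdC_pdC_planeWave_add (i : Fin 3) (A B : ℂ) (k k' : Fin 3 → ℝ) (b b' : ℂ) :
    pdC i (pdC i (planeWave A k b + planeWave B k' b'))
      = planeWave (-(A * k i ^ 2)) k b + planeWave (-(B * k' i ^ 2)) k' b' := by
  have h_coeff (C : ℂ) (a : ℝ) : C * I * a * I * a = -(C * a ^ 2) := by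
    linear_combination C * (a : ℂ) ^ 2 * I_sq
  simp only [pdC_add (differentiable_planeWave _ _ _) (differentiable_planeWave _ _ _),
    pdC_planeWave, h_coeff]

lemma hasDerivAt_mul_cexp_mul (A z : ℂ) (t : ℝ) :
    HasDerivAt (fun r : ℝ => A * cexp (z * r)) (A * z * cexp (z * t)) t := by
  have h := (((hasDerivAt_id t).ofReal_comp).const_mul z).cexp.const_mul A
  refine h.congr_deriv ?_
  simp only [id, ofReal_one, mul_one]
  ring

lemma deriv_deriv_mul_cexp_mul (A z : ℂ) (t : ℝ) :
    deriv (fun s => deriv (fun r : ℝ => A * cexp (z * r)) s) t = A * z ^ 2 * cexp (z * t) := by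
  have h : deriv (fun r : ℝ => A * cexp (z * r)) = fun s : ℝ => A * z * cexp (z * s) :=
    funext fun s => (hasDerivAt_mul_cexp_mul A z s).deriv
  rw [h, (hasDerivAt_mul_cexp_mul (A * z) z t).deriv]
  ring

theorem piezoelectric_directivity_general
    (c cp κ : ℝ) (hc : 0 < c)
    (n : Fin 3 → ℝ) (hn : n = Pi.single 2 1)
    (k : Fin 3 → ℝ) (hk : k ≠ 0)
    (ω : ℝ) (hω : ω = c * Real.sqrt (dot3 k k))
    (cosθ : ℝ) (hcosθ : cosθ = dot3 k n / Real.sqrt (dot3 k k))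
    (sin2θ : ℝ) (hsin2θ : sin2θ = 1 - cosθ ^ 2)
    (kr : Fin 3 → ℝ) (hkr : kr = fun i => k i - 2 * dot3 k n * n i)
    (R : ℝ)
    (p : ℝ → (Fin 3 → ℝ) → ℂ)
    (hp : ∀ t x, p t x
      = Complex.exp (Complex.I * ((dot3 x k : ℝ) - ω * t))
        + (R : ℂ) * Complex.exp (Complex.I * ((dot3 x kr : ℝ) - ω * t))) :
    ∀ t : ℝ,
      deriv (fun s => deriv (fun r => p r 0) s) t
          - (κ : ℂ) * (cp : ℂ) ^ 2 * (pdC 0 (pdC 0 (p t)) 0 + pdC 1 (pdC 1 (p t)) 0)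
        = -(ω : ℂ) ^ 2 * (1 + (R : ℂ))
            * (1 - (κ : ℂ) * ((cp ^ 2 / c ^ 2 : ℝ) : ℂ) * (sin2θ : ℂ))
            * Complex.exp (-Complex.I * ω * t) := by
  intro t
  subst hn
  have h_space : p t = planeWave 1 k (-I * ω * t) + planeWave R kr (-I * ω * t) := by
    ext x
    simp only [hp, planeWave, Pi.add_apply, one_mul]
    ring_nf
  have h_time : (fun r : ℝ => p r 0) = fun r : ℝ => (1 + R) * cexp (-I * ω * r) := by
    ext r
    simp only [hp, dot3_eq_dotProduct, zero_dotProduct, ofReal_zero]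
    ring_nf
  have h_transverse : ω ^ 2 * (cp ^ 2 / c ^ 2) * sin2θ = cp ^ 2 * (k 0 ^ 2 + k 1 ^ 2) := by
    rw [hω, hsin2θ, hcosθ, ← dot3_self_mul_one_sub_cos_sq hk, mul_pow,
      Real.sq_sqrt (dot3_self_pos hk).le]
    field_simp
  have h_transverseC : (ω : ℂ) ^ 2 * ((cp ^ 2 / c ^ 2 : ℝ) : ℂ) * sin2θ
      = cp ^ 2 * ((k 0 : ℂ) ^ 2 + (k 1 : ℂ) ^ 2) := by
    exact_mod_cast h_transverse
  rw [h_time, deriv_deriv_mul_cexp_mul, h_space, pdC_pdC_planeWave_add, pdC_pdC_planeWave_add]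
  have h_kr : ∀ i : Fin 3, i ≠ 2 → kr i = k i := fun i hi => by simp [hkr, hi]
  simp only [Pi.add_apply, planeWave_zero, h_kr 0 (by decide), h_kr 1 (by decide),
    mul_pow, neg_sq, I_sq]
  linear_combination (-(1 + (R : ℂ)) * κ * cexp (-I * ω * t)) * h_transverseC

/-- directivity of the piezoelectric sensor on the flat boundary
`{x₃ = 0}` with outward normal `e₃`: for the total field `p` (incident plus
reflected plane wave) one has, at the origin,
`∂_t² p − κ c_p² Δ_⊥ p = −ω²(1+R)(1 − κ (c_p²/c²) sin²θ) e^{−iωt}`. -/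
theorem piezoelectric_directivity
    (c ρ cb ρb cp κ : ℝ) (hc : 0 < c) (hρ : 0 < ρ) (hcb : 0 < cb) (hρb : 0 < ρb)
    (hcp : 0 < cp)
    (α : ℝ) (hα : α = ρ * c / (ρb * cb))
    (n : Fin 3 → ℝ) (hn : n = Pi.single 2 1)
    (k : Fin 3 → ℝ) (hk : k ≠ 0) (hkn : 0 ≤ dot3 k n)
    (ω : ℝ) (hω : ω = c * Real.sqrt (dot3 k k))
    (cosθ : ℝ) (hcosθ : cosθ = dot3 k n / Real.sqrt (dot3 k k))
    (sin2θ : ℝ) (hsin2θ : sin2θ = 1 - cosθ ^ 2)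
    (kr : Fin 3 → ℝ) (hkr : kr = fun i => k i - 2 * dot3 k n * n i)
    (R : ℝ) (hR : R = (cosθ - α) / (cosθ + α))
    (p : ℝ → (Fin 3 → ℝ) → ℂ)
    (hp : ∀ t x, p t x
      = Complex.exp (Complex.I * ((dot3 x k : ℝ) - ω * t))
        + (R : ℂ) * Complex.exp (Complex.I * ((dot3 x kr : ℝ) - ω * t))) :
    ∀ t : ℝ,
      deriv (fun s => deriv (fun r => p r 0) s) t
          - (κ : ℂ) * (cp : ℂ) ^ 2 * (pdC 0 (pdC 0 (p t)) 0 + pdC 1 (pdC 1 (p t)) 0)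
        = -(ω : ℂ) ^ 2 * (1 + (R : ℂ))
            * (1 - (κ : ℂ) * ((cp ^ 2 / c ^ 2 : ℝ) : ℂ) * (sin2θ : ℂ))
            * Complex.exp (-Complex.I * ω * t) :=
  piezoelectric_directivity_general c cp κ hc n hn k hk ω hω cosθ hcosθ sin2θ hsin2θ kr hkr R p hp
end
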